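/- arXiv:2205.13924 — 5 statements merged into one kernel-verified Lean document; each statement's English description precedes it below -/
import Mathlib

section
/- For every q ∈ [0,1] and every u ≤ 0, log(1 + q·(exp(u) − 1)) ≤ q·(u + u²/2). -/
lemma exp_le_quadratic_of_nonpos {u : ℝ} (hu : u ≤ 0) :
    Real.exp u ≤ 1 + u + u ^ 2 / 2 := by
  have h : AntitoneOn (fun x : ℝ => 1 + x + x ^ 2 / 2 - Real.exp x) (Set.Iic 0) := by
    apply antitoneOn_of_deriv_nonpos (convex_Iic 0)
    · fun_prop
    · fun_prop
    · intro x hx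
      rw [interior_Iic] at hx
      have hd : HasDerivAt (fun x : ℝ => 1 + x + x ^ 2 / 2 - Real.exp x)
          (0 + 1 + (2 : ℕ) * x ^ (2 - 1) / 2 - Real.exp x) x :=
        (((hasDerivAt_const x (1:ℝ)).add (hasDerivAt_id x)).add
          (((hasDerivAt_pow 2 x)).div_const 2)).sub (Real.hasDerivAt_exp x)
      rw [hd.deriv]
      have := Real.add_one_le_exp x
      push_cast
      norm_num
      linarith
  have := h (Set.mem_Iic.2 hu) (Set.mem_Iic.2 le_rfl) hu
  simp [Real.exp_zero] at this
  linarith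

/-- For every `q ∈ [0,1]` and `u ≤ 0`, `log(1 + q(e^u − 1)) ≤ q(u + u²/2)`. -/
theorem log_one_add_mul_exp_sub_one_le (q u : ℝ) (hq : q ∈ Set.Icc (0 : ℝ) 1)
    (hu : u ≤ 0) :
    Real.log (1 + q * (Real.exp u - 1)) ≤ q * (u + u ^ 2 / 2) := by
  obtain ⟨hq0, hq1⟩ := hq
  have hexp : 0 < Real.exp u := Real.exp_pos u
  have hpos : 0 < 1 + q * (Real.exp u - 1) := by
    rcases eq_or_lt_of_le hq1 with h | h
    · subst h; nlinarith
    · nlinarith [mul_nonneg hq0 hexp.le]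
  have h1 : Real.log (1 + q * (Real.exp u - 1)) ≤ q * (Real.exp u - 1) := by
    have := Real.log_le_sub_one_of_pos hpos
    linarith
  have h2 : Real.exp u - 1 ≤ u + u ^ 2 / 2 := by
    have := exp_le_quadratic_of_nonpos hu
    linarith
  calc Real.log (1 + q * (Real.exp u - 1)) ≤ q * (Real.exp u - 1) := h1
    _ ≤ q * (u + u ^ 2 / 2) := mul_le_mul_of_nonneg_left h2 hq0
end

section
/- In the one-round Thompson sampling setup, the squared regret is bounded as R² ≤ 2·K·I; equivalently, the lifted information ratio of Thompson sampling with K actions and losses in [0,1] is at most 2K. -/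
/-!
Write `pₐ` for the probability that `a⋆ = a`. Summing out the independent copy `θ'`, the
regret becomes `R = ∑_θ μ(θ) (ℓ̄(a⋆ θ) - ℓ(θ, a⋆ θ))` and the information gain becomes
`I = ∑ₐ pₐ ∑_θ μ(θ) g(ℓ(θ, a) ‖ ℓ̄(a))`. Splitting `R` along the fibres of `a⋆`, Cauchy–Schwarz
over the `K` actions and then inside each fibre gives `R² ≤ K ∑ₐ pₐ ∑_θ μ(θ) (ℓ̄(a) - ℓ(θ, a))²`,
and the Pinsker-type bound `(p - q)² ≤ g(p ‖ q)` finishes the proof.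
-/

/-- Binary relative entropy `g(p‖q)` (with Lean's conventions `log 0 = 0`,
`0/0 = 0`, realizing `0 · log 0 = 0`). -/
noncomputable def binRelEnt (p q : ℝ) : ℝ :=
  p * Real.log (p / q) + (1 - p) * Real.log ((1 - p) / (1 - q))

open Real Finset

lemma mul_log_div_eq (x : ℝ) {q : ℝ} (hq : q ≠ 0) : x * log (x / q) = x * log x - x * log q := by
  rcases eq_or_ne x 0 with rfl | hx
  · simp
  · rw [log_div hx hq, mul_sub]

lemma binRelEnt_eq {p q : ℝ} (hq0 : q ≠ 0) (hq1 : q ≠ 1) :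
    binRelEnt p q = -binEntropy p - p * log q - (1 - p) * log (1 - q) := by
  rw [binRelEnt, mul_log_div_eq p hq0, mul_log_div_eq (1 - p) (sub_ne_zero.2 hq1.symm), binEntropy,
    log_inv, log_inv]
  ring

lemma binRelEnt_one_sub (p q : ℝ) : binRelEnt (1 - p) (1 - q) = binRelEnt p q := by
  simp only [binRelEnt, sub_sub_cancel]
  ring

lemma sub_le_log_sub_log {x y : ℝ} (hy : 0 < y) (hyx : y ≤ x) (hx : x ≤ 1) :
    x - y ≤ log x - log y := by
  have hx0 : 0 < x := hy.trans_le hyx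
  have h := one_sub_inv_le_log_of_pos (div_pos hx0 hy)
  rw [log_div hx0.ne' hy.ne', inv_div, one_sub_div hx0.ne'] at h
  exact (le_div_self (sub_nonneg.2 hyx) hx0 hx).trans h

lemma sq_sub_le_binRelEnt {p q : ℝ} (hp0 : 0 ≤ p) (hp1 : p ≤ 1) (hq0 : 0 < q) (hq1 : q < 1) :
    (p - q) ^ 2 ≤ binRelEnt p q := by
  wlog hqp : q ≤ p generalizing p q
  · rw [← binRelEnt_one_sub, ← neg_sq, neg_sub, ← sub_sub_sub_cancel_left p q 1]
    exact this (by linarith) (by linarith) (by linarith) (by linarith) (by linarith)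
  set F : ℝ → ℝ := fun x => -binEntropy x - x * log q - (1 - x) * log (1 - q) - (x - q) ^ 2
  have hF : MonotoneOn F (Set.Icc q p) := by
    refine monotoneOn_of_hasDerivWithinAt_nonneg (convex_Icc q p) (by fun_prop)
      (f' := fun x => (log x - log q) + (log (1 - q) - log (1 - x)) - 2 * (x - q))
      (fun x hx => ?_) (fun x hx => ?_) <;> rw [interior_Icc] at hx
    · have hx0 : x ≠ 0 := (hq0.trans hx.1).ne'
      have hx1 : x ≠ 1 := (hx.2.trans_le hp1).ne
      refine HasDerivAt.hasDerivWithinAt ?_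
      refine ((((hasDerivAt_binEntropy hx0 hx1).neg.sub ((hasDerivAt_id' x).mul_const (log q))).sub
        (((hasDerivAt_id' x).const_sub 1).mul_const (log (1 - q)))).sub
        (((hasDerivAt_id' x).sub_const q).pow 2)).congr_deriv ?_
      norm_num
      ring
    · have h1 := sub_le_log_sub_log hq0 hx.1.le (hx.2.le.trans hp1)
      have h2 := sub_le_log_sub_log (x := 1 - q) (y := 1 - x) (by linarith [hx.2])
        (by linarith [hx.1]) (by linarith)
      linarith
  have hFp := hF (Set.left_mem_Icc.2 hqp) (Set.right_mem_Icc.2 hqp) hqp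
  simp only [F, binEntropy, log_inv, sub_self] at hFp
  rw [binRelEnt_eq hq0.ne' hq1.ne, binEntropy, log_inv, log_inv]
  linarith

lemma abs_binRelEnt_le {p q : ℝ} (hp0 : 0 ≤ p) (hp1 : p ≤ 1) (hq0 : 0 < q) (hq1 : q < 1) :
    |binRelEnt p q| ≤ -log q - log (1 - q) := by
  rw [abs_of_nonneg ((sq_nonneg _).trans (sq_sub_le_binRelEnt hp0 hp1 hq0 hq1)),
    binRelEnt_eq hq0.ne' hq1.ne]
  have := binEntropy_nonneg hp0 hp1
  have := log_neg hq0 hq1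
  have := log_neg (sub_pos.2 hq1) (by linarith)
  nlinarith

section Pushforward

variable {Θ ι : Type*} {μ : Θ → ℝ}

lemma summable_mul_of_abs_le (hμ0 : ∀ θ, 0 ≤ μ θ) (hμ : Summable μ) {x : Θ → ℝ} {C : ℝ}
    (hx : ∀ θ, |x θ| ≤ C) : Summable fun θ => μ θ * x θ :=
  (hμ.mul_right C).of_norm_bounded fun θ => by
    rw [norm_mul, norm_of_nonneg (hμ0 θ)]
    exact mul_le_mul_of_nonneg_left (hx θ) (hμ0 θ)

lemma sq_tsum_mul_le_tsum_mul_tsum (hμ0 : ∀ θ, 0 ≤ μ θ) (hμ : Summable μ) {x : Θ → ℝ}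
    (hμx : Summable fun θ => μ θ * x θ) (hμx2 : Summable fun θ => μ θ * x θ ^ 2) :
    (∑' θ, μ θ * x θ) ^ 2 ≤ (∑' θ, μ θ) * ∑' θ, μ θ * x θ ^ 2 := by
  have hquad (t : ℝ) :
      0 ≤ (∑' θ, μ θ) * (t * t) + (-2 * ∑' θ, μ θ * x θ) * t + ∑' θ, μ θ * x θ ^ 2 := by
    have h := ((hμ.hasSum.mul_right (t * t)).add (hμx.hasSum.mul_left (-2 * t))).add hμx2.hasSum
    have := h.nonneg fun θ => by nlinarith [mul_nonneg (hμ0 θ) (sq_nonneg (t - x θ))]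
    linarith
  have := discrim_le_zero hquad
  rw [discrim] at this
  linarith

noncomputable def pushforward (μ : Θ → ℝ) (f : Θ → ι) (a : ι) : ℝ :=
  ∑' θ, (f ⁻¹' {a}).indicator μ θ

variable (f : Θ → ι)

lemma pushforward_nonneg (hμ0 : ∀ θ, 0 ≤ μ θ) (a : ι) : 0 ≤ pushforward μ f a :=
  tsum_nonneg <| Set.indicator_nonneg fun θ _ => hμ0 θ

variable [Fintype ι]

lemma mul_apply_eq_sum_indicator_mul (x : Θ → ι → ℝ) (θ : Θ) :
    μ θ * x θ (f θ) = ∑ a, (f ⁻¹' {a}).indicator μ θ * x θ a := by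
  rw [Finset.sum_eq_single (f θ) (fun a _ ha => by simp [Ne.symm ha]) (by simp)]
  simp

lemma hasSum_mul_apply_comp {x : Θ → ι → ℝ}
    (hx : ∀ a, Summable fun θ => (f ⁻¹' {a}).indicator μ θ * x θ a) :
    HasSum (fun θ => μ θ * x θ (f θ)) (∑ a, ∑' θ, (f ⁻¹' {a}).indicator μ θ * x θ a) := by
  simp_rw [mul_apply_eq_sum_indicator_mul f x]
  exact hasSum_sum fun a _ => (hx a).hasSum

lemma hasSum_mul_comp (hμ : Summable μ) (c : ι → ℝ) :
    HasSum (fun θ => μ θ * c (f θ)) (∑ a, pushforward μ f a * c a) := by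
  simpa only [pushforward, tsum_mul_right] using
    hasSum_mul_apply_comp f (x := fun _ => c) fun a => (hμ.indicator _).mul_right (c a)

lemma tsum_tsum_mul_mul_apply_comp (hμ : Summable μ) {h : Θ → ι → ℝ}
    (hh : ∀ a, Summable fun θ => μ θ * h θ a) :
    ∑' θ, ∑' θ', μ θ * μ θ' * h θ (f θ') = ∑ a, pushforward μ f a * ∑' θ, μ θ * h θ a := by
  have inner (θ : Θ) :
      ∑' θ', μ θ * μ θ' * h θ (f θ') = ∑ a, pushforward μ f a * (μ θ * h θ a) := by
    rw [← (hasSum_mul_comp f hμ fun a => μ θ * h θ a).tsum_eq]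
    exact tsum_congr fun θ' => by ring
  rw [tsum_congr inner, Summable.tsum_finsetSum fun a _ => (hh a).mul_left _]
  simp_rw [tsum_mul_left]

lemma sq_tsum_mul_apply_comp_le (hμ0 : ∀ θ, 0 ≤ μ θ) (hμ : Summable μ) {x : Θ → ι → ℝ} {C : ℝ}
    (hx : ∀ θ a, |x θ a| ≤ C) :
    (∑' θ, μ θ * x θ (f θ)) ^ 2
      ≤ Fintype.card ι * ∑ a, pushforward μ f a * ∑' θ, μ θ * x θ a ^ 2 := by
  set w : ι → Θ → ℝ := fun a => (f ⁻¹' {a}).indicator μ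
  have hw0 (a : ι) : ∀ θ, 0 ≤ w a θ := Set.indicator_nonneg fun θ _ => hμ0 θ
  have hw (a : ι) : Summable (w a) := hμ.indicator _
  have hx2 (θ : Θ) (a : ι) : |x θ a ^ 2| ≤ C ^ 2 := by
    rw [abs_pow]
    exact pow_le_pow_left₀ (abs_nonneg _) (hx θ a) 2
  have hwx (a : ι) : Summable fun θ => w a θ * x θ a :=
    summable_mul_of_abs_le (hw0 a) (hw a) fun θ => hx θ a
  have hwx2 (a : ι) : Summable fun θ => w a θ * x θ a ^ 2 :=
    summable_mul_of_abs_le (hw0 a) (hw a) fun θ => hx2 θ a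
  rw [(hasSum_mul_apply_comp f hwx).tsum_eq]
  calc _ ≤ Fintype.card ι * ∑ a, (∑' θ, w a θ * x θ a) ^ 2 := by
        simpa using sq_sum_le_card_mul_sum_sq (s := univ) (f := fun a => ∑' θ, w a θ * x θ a)
    _ ≤ Fintype.card ι * ∑ a, pushforward μ f a * ∑' θ, w a θ * x θ a ^ 2 := by
        gcongr with a
        exact sq_tsum_mul_le_tsum_mul_tsum (hw0 a) (hw a) (hwx a) (hwx2 a)
    _ ≤ Fintype.card ι * ∑ a, pushforward μ f a * ∑' θ, μ θ * x θ a ^ 2 := by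
        gcongr with a _ θ
        · exact pushforward_nonneg f hμ0 a
        · exact hwx2 a
        · exact summable_mul_of_abs_le hμ0 hμ fun θ => hx2 θ a
        · exact Set.indicator_le_self' (fun θ _ => hμ0 θ) θ

lemma tsum_tsum_mul_mul_sub_comp (hμ0 : ∀ θ, 0 ≤ μ θ) (hμ : HasSum μ 1) {ℓ : Θ → ι → ℝ} {C : ℝ}
    (hℓ : ∀ θ a, |ℓ θ a| ≤ C) :
    ∑' θ, ∑' θ', μ θ * μ θ' * (ℓ θ (f θ') - ℓ θ (f θ))
      = ∑' θ, μ θ * (∑' θ', μ θ' * ℓ θ' (f θ) - ℓ θ (f θ)) := by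
  have hμs := hμ.summable
  have hℓa (a : ι) : Summable fun θ => μ θ * ℓ θ a :=
    summable_mul_of_abs_le hμ0 hμs fun θ => hℓ θ a
  have hℓf : Summable fun θ => μ θ * ℓ θ (f θ) :=
    summable_mul_of_abs_le hμ0 hμs fun θ => hℓ θ (f θ)
  set L := ∑' θ, μ θ * ℓ θ (f θ)
  set lbar : ι → ℝ := fun a => ∑' θ, μ θ * ℓ θ a
  have hlbar := hasSum_mul_comp f hμs lbar
  calc _ = ∑ a, pushforward μ f a * ∑' θ, μ θ * (ℓ θ a - ℓ θ (f θ)) := by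
        refine tsum_tsum_mul_mul_apply_comp f hμs (h := fun θ a => ℓ θ a - ℓ θ (f θ)) fun a => ?_
        simpa only [mul_sub] using (hℓa a).sub hℓf
    _ = ∑ a, pushforward μ f a * (lbar a - L) := by
        simp only [mul_sub (μ _), (hℓa _).tsum_sub hℓf]
        rfl
    _ = ∑' θ, μ θ * (lbar (f θ) - L) := (hasSum_mul_comp f hμs _).tsum_eq.symm
    _ = _ := by
        simp_rw [mul_sub]
        rw [hlbar.summable.tsum_sub (hμs.mul_right L), hlbar.summable.tsum_sub hℓf,
          tsum_mul_right, hμ.tsum_eq, one_mul]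

end Pushforward

theorem sq_regret_le_two_K_mul_infoGain_general
    {Θ : Type*} {K : ℕ}
    (μ : Θ → ℝ) (hμ0 : ∀ θ, 0 ≤ μ θ) (hμ1 : HasSum μ 1)
    (ℓ : Θ → Fin K → ℝ) (hℓ : ∀ θ a, ℓ θ a ∈ Set.Icc (0 : ℝ) 1)
    (astar : Θ → Fin K)
    (lbar : Fin K → ℝ) (hlbar : ∀ a, lbar a = ∑' θ, μ θ * ℓ θ a)
    (hlbar01 : ∀ a, lbar a ∈ Set.Ioo (0 : ℝ) 1)
    (R I : ℝ)
    (hR : R = ∑' θ, ∑' θ', μ θ * μ θ' * (ℓ θ (astar θ') - ℓ θ (astar θ)))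
    (hI : I = ∑' θ, ∑' θ',
      μ θ * μ θ' * binRelEnt (ℓ θ (astar θ')) (lbar (astar θ'))) :
    R ^ 2 ≤ 2 * (K : ℝ) * I := by
  have hμ := hμ1.summable
  have hℓ_abs (θ a) : |ℓ θ a| ≤ 1 := abs_le.2 ⟨by linarith [(hℓ θ a).1], (hℓ θ a).2⟩
  have hgap (θ a) : |lbar a - ℓ θ a| ≤ 1 :=
    abs_le.2 ⟨by linarith [(hℓ θ a).2, (hlbar01 a).1], by linarith [(hℓ θ a).1, (hlbar01 a).2]⟩
  have hpinsker (θ a) : (lbar a - ℓ θ a) ^ 2 ≤ binRelEnt (ℓ θ a) (lbar a) := by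
    rw [← neg_sub, neg_sq]
    exact sq_sub_le_binRelEnt (hℓ θ a).1 (hℓ θ a).2 (hlbar01 a).1 (hlbar01 a).2
  have hg (a) : Summable fun θ => μ θ * binRelEnt (ℓ θ a) (lbar a) :=
    summable_mul_of_abs_le hμ0 hμ fun θ =>
      abs_binRelEnt_le (hℓ θ a).1 (hℓ θ a).2 (hlbar01 a).1 (hlbar01 a).2
  have hR' : R = ∑' θ, μ θ * (lbar (astar θ) - ℓ θ (astar θ)) := by
    rw [hR, tsum_tsum_mul_mul_sub_comp astar hμ0 hμ1 hℓ_abs]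
    simp only [← hlbar]
  have hI' : I = ∑ a, pushforward μ astar a * ∑' θ, μ θ * binRelEnt (ℓ θ a) (lbar a) :=
    hI ▸ tsum_tsum_mul_mul_apply_comp astar hμ (h := fun θ a => binRelEnt (ℓ θ a) (lbar a)) hg
  have hRI : R ^ 2 ≤ K * I := calc
    R ^ 2 ≤ K * ∑ a, pushforward μ astar a * ∑' θ, μ θ * (lbar a - ℓ θ a) ^ 2 := by
      simpa only [hR', Fintype.card_fin] using sq_tsum_mul_apply_comp_le astar hμ0 hμ hgap
    _ ≤ K * I := by
      rw [hI']
      gcongr with a _ θ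
      · exact pushforward_nonneg astar hμ0 a
      · exact Summable.of_nonneg_of_le (fun θ => mul_nonneg (hμ0 θ) (sq_nonneg _))
          (fun θ => mul_le_mul_of_nonneg_left (hpinsker θ a) (hμ0 θ)) (hg a)
      · exact hg a
      · exact hμ0 θ
      · exact hpinsker θ a
  linarith [sq_nonneg R]

/-- One-round Thompson sampling with `K` actions and losses in `[0,1]`:
`R² ≤ 2 K I`, i.e. the lifted information ratio is at most `2K`. -/
theorem sq_regret_le_two_K_mul_infoGain
    {Θ : Type*} [Countable Θ] {K : ℕ} (hK : 1 ≤ K)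
    (μ : Θ → ℝ) (hμ0 : ∀ θ, 0 ≤ μ θ) (hμ1 : HasSum μ 1)
    (ℓ : Θ → Fin K → ℝ) (hℓ : ∀ θ a, ℓ θ a ∈ Set.Icc (0 : ℝ) 1)
    (astar : Θ → Fin K)
    (lbar : Fin K → ℝ) (hlbar : ∀ a, lbar a = ∑' θ, μ θ * ℓ θ a)
    (hlbar01 : ∀ a, lbar a ∈ Set.Ioo (0 : ℝ) 1)
    (R I : ℝ)
    (hR : R = ∑' θ, ∑' θ', μ θ * μ θ' * (ℓ θ (astar θ') - ℓ θ (astar θ)))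
    (hI : I = ∑' θ, ∑' θ',
      μ θ * μ θ' * binRelEnt (ℓ θ (astar θ')) (lbar (astar θ'))) :
    R ^ 2 ≤ 2 * (K : ℝ) * I :=
  sq_regret_le_two_K_mul_infoGain_general μ hμ0 hμ1 ℓ hℓ astar lbar hlbar hlbar01 R I hR hI
end

section
/- For every real n × n matrix M, the square of its trace is at most its rank times its squared Frobenius norm: (trace M)² ≤ (rank M) · ∑_{i,j} (M i j)². -/
/-!
Let `P` be the orthogonal projection onto the column space of `M`, viewed as a symmetric
idempotent matrix. Then `tr M = tr (P M)` is the Frobenius pairing of `Pᵀ` with `M`, so by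
Cauchy–Schwarz `(tr M)² ≤ ‖P‖_F² ‖M‖_F²`, while `‖P‖_F² = tr (P Pᵀ) = tr P = rank M`.
-/

namespace Matrix

section Real

variable {m n : Type*} [Fintype m] [Fintype n]

theorem sq_trace_mul_le (A : Matrix m n ℝ) (B : Matrix n m ℝ) :
    trace (A * B) ^ 2 ≤ (∑ i, ∑ j, A i j ^ 2) * ∑ i, ∑ j, B i j ^ 2 := by
  have h := Finset.sum_mul_sq_le_sq_mul_sq Finset.univ
    (fun p : m × n ↦ A p.1 p.2) (fun p ↦ B p.2 p.1)
  simp only [Fintype.sum_prod_type] at h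
  rwa [Finset.sum_comm (f := fun i j ↦ B j i ^ 2)] at h

theorem sum_sq_eq_trace_of_isStarProjection {P : Matrix n n ℝ} (hP : IsStarProjection P) :
    ∑ i, ∑ j, P i j ^ 2 = trace P :=
  calc ∑ i, ∑ j, P i j ^ 2 = trace (P * Pᴴ) := by simp [trace, mul_apply, sq]
    _ = trace P := by
      rw [← star_eq_conjTranspose, hP.isSelfAdjoint.star_eq, hP.isIdempotentElem.eq]

end Real

variable {𝕜 m n : Type*} [RCLike 𝕜] [Fintype n] [DecidableEq n]

theorem rank_eq_finrank_range_toEuclideanLin [Fintype m] (M : Matrix m n 𝕜) :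
    M.rank = Module.finrank 𝕜 (LinearMap.range (toEuclideanLin M)) :=
  M.rank_eq_finrank_range_toLin (PiLp.basisFun 2 𝕜 m) (PiLp.basisFun 2 𝕜 n)

theorem trace_eq_trace_toEuclideanLin (M : Matrix n n 𝕜) :
    trace M = LinearMap.trace 𝕜 _ (toEuclideanLin M) := by
  rw [LinearMap.trace_eq_matrix_trace 𝕜 (PiLp.basisFun 2 𝕜 n), toEuclideanLin, toLpLin_eq_toLin,
    LinearMap.toMatrix_toLin]

theorem exists_isStarProjection_mul_eq_self_trace_eq_rank (M : Matrix n n 𝕜) :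
    ∃ P : Matrix n n 𝕜, IsStarProjection P ∧ P * M = M ∧ trace P = M.rank := by
  set K := LinearMap.range (toEuclideanLin M)
  set e := toEuclideanCLM (n := n) (𝕜 := 𝕜)
  have hfix : K.starProjection * e M = e M := by
    ext1 x
    exact K.starProjection_eq_self_iff.mpr (LinearMap.mem_range_self _ x)
  refine ⟨e.symm K.starProjection, isStarProjection_starProjection.map e.symm.toStarAlgHom, ?_, ?_⟩
  · calc e.symm K.starProjection * M = e.symm (K.starProjection * e M) := by
          rw [map_mul, StarAlgEquiv.symm_apply_apply]
      _ = M := by rw [hfix, StarAlgEquiv.symm_apply_apply]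
  · have hproj := LinearMap.IsIdempotentElem.isProj_range _
      (ContinuousLinearMap.IsIdempotentElem.toLinearMap K.isIdempotentElem_starProjection)
    rw [K.range_starProjection] at hproj
    rw [trace_eq_trace_toEuclideanLin, ← coe_toEuclideanCLM_eq_toEuclideanLin,
      StarAlgEquiv.apply_symm_apply, rank_eq_finrank_range_toEuclideanLin, hproj.trace]

end Matrix

/-- For every real `n × n` matrix `M`,
`(trace M)² ≤ rank M · ‖M‖_F²` where `‖M‖_F² = ∑_{i,j} (M i j)²`. -/
theorem sq_trace_le_rank_mul_sq_frobenius {n : ℕ} (M : Matrix (Fin n) (Fin n) ℝ) :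
    (Matrix.trace M) ^ 2 ≤ (M.rank : ℝ) * ∑ i, ∑ j, (M i j) ^ 2 := by
  obtain ⟨P, hP, hPM, htrace⟩ := M.exists_isStarProjection_mul_eq_self_trace_eq_rank
  calc M.trace ^ 2 = (P * M).trace ^ 2 := by rw [hPM]
    _ ≤ (∑ i, ∑ j, P i j ^ 2) * ∑ i, ∑ j, M i j ^ 2 := Matrix.sq_trace_mul_le P M
    _ = M.rank * ∑ i, ∑ j, M i j ^ 2 := by
      rw [Matrix.sum_sq_eq_trace_of_isStarProjection hP, htrace]
end

section
/- Maximum of K standard Gaussians, squared: let (Ω, ℙ) be a probability space, K ≥ 1, and Z : Ω → Fin K → ℝ a random vector such that for every a ∈ Fin K the real random variable ω ↦ Z(ω)(a) has the standard Gaussian law (mean 0, variance 1); no independence is assumed. Then ∫ max_{a ∈ Fin K} (Z(ω)(a))² dℙ(ω) ≤ 2·(1 + log K). -/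
open MeasureTheory ProbabilityTheory Real Set
open scoped ENNReal NNReal

lemma gauss_Ioi_le {u : ℝ} (hu : 0 ≤ u) :
    gaussianReal 0 1 (Set.Ioi u) ≤ ENNReal.ofReal (Real.exp (-(u^2)/2) / 2) := by
  rw [gaussianReal_apply_eq_integral 0 one_ne_zero]
  apply ENNReal.ofReal_le_ofReal
  have h2π : (0:ℝ) < Real.sqrt (2 * Real.pi) := Real.sqrt_pos.2 (by positivity)
  -- shifted gaussian integral
  have hshift : ∫ x in Set.Ioi u, Real.exp (-((x-u)^2)/2)
      = ∫ x in Set.Ioi (0:ℝ), Real.exp (-(x^2)/2) := by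
    have hemb : MeasurableEmbedding (fun x : ℝ => x + u) :=
      (Homeomorph.addRight u).isClosedEmbedding.measurableEmbedding
    have := (measurePreserving_add_right (volume : Measure ℝ) u).setIntegral_preimage_emb
      hemb (fun x => Real.exp (-((x-u)^2)/2)) (Set.Ioi u)
    simpa [Set.preimage_add_const_Ioi] using this.symm
  have hIoi0 : ∫ x in Set.Ioi (0:ℝ), Real.exp (-(x^2)/2) = Real.sqrt (2*Real.pi) / 2 := by
    have h := integral_gaussian_Ioi (1/2 : ℝ)
    have : ∀ x : ℝ, Real.exp (-(1/2 : ℝ) * x^2) = Real.exp (-(x^2)/2) := by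
      intro x; ring_nf
    rw [show (fun x : ℝ => Real.exp (-(x^2)/2)) = fun x : ℝ => Real.exp (-(1/2:ℝ) * x^2) by
      funext x; rw [this x]] at *
    rw [h]
    rw [show Real.pi / (1/2 : ℝ) = 2 * Real.pi by ring]
  have hint1 : IntegrableOn (gaussianPDFReal 0 1) (Set.Ioi u) :=
    (integrable_gaussianPDFReal 0 1).integrableOn
  have hint2' : Integrable (fun x : ℝ => Real.exp (-(1/2:ℝ) * x^2)) :=
    integrable_exp_neg_mul_sq (by norm_num)
  have hint2 : IntegrableOn
      (fun x => Real.exp (-(u^2)/2) * ((Real.sqrt (2*Real.pi))⁻¹ * Real.exp (-((x-u)^2)/2)))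
      (Set.Ioi u) := by
    have : Integrable (fun x : ℝ => Real.exp (-((x-u)^2)/2)) := by
      have h := hint2'.comp_sub_right u
      apply h.congr
      filter_upwards with x
      ring_nf
    exact ((this.const_mul _).const_mul _).integrableOn
  have hmono : ∀ x ∈ Set.Ioi u, gaussianPDFReal 0 1 x
      ≤ Real.exp (-(u^2)/2) * ((Real.sqrt (2*Real.pi))⁻¹ * Real.exp (-((x-u)^2)/2)) := by
    intro x hx
    simp only [gaussianPDFReal, NNReal.coe_one, mul_one, sub_zero]
    rw [← mul_assoc, mul_comm (Real.exp (-(u^2)/2)), mul_assoc, ← Real.exp_add]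
    have hux : u < x := hx
    have hexp : Real.exp (-x^2/2) ≤ Real.exp (-(u^2)/2 + -((x-u)^2)/2) := by
      apply Real.exp_le_exp.2
      nlinarith
    calc (Real.sqrt (2*Real.pi))⁻¹ * Real.exp (-x^2/2)
        ≤ (Real.sqrt (2*Real.pi))⁻¹ * Real.exp (-(u^2)/2 + -((x-u)^2)/2) := by
          gcongr
      _ = (Real.sqrt (2*Real.pi))⁻¹ * Real.exp (-(u^2)/2 + -((x-u)^2)/2) := rfl
  calc ∫ x in Set.Ioi u, gaussianPDFReal 0 1 x
      ≤ ∫ x in Set.Ioi u,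
          Real.exp (-(u^2)/2) * ((Real.sqrt (2*Real.pi))⁻¹ * Real.exp (-((x-u)^2)/2)) :=
        setIntegral_mono_on hint1 hint2 measurableSet_Ioi hmono
    _ = Real.exp (-(u^2)/2) * ((Real.sqrt (2*Real.pi))⁻¹
          * ∫ x in Set.Ioi u, Real.exp (-((x-u)^2)/2)) := by
        rw [integral_const_mul, integral_const_mul]
    _ = Real.exp (-(u^2)/2) / 2 := by
        rw [hshift, hIoi0]
        field_simp

lemma gauss_map_neg : (gaussianReal 0 1).map (fun x : ℝ => (-1 : ℝ) * x) = gaussianReal 0 1 := by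
  have h := gaussianReal_map_const_mul (μ := 0) (v := 1) (-1 : ℝ)
  simp only [mul_zero] at h
  convert h using 2
  ext
  norm_num

lemma gauss_Iio_le {u : ℝ} (hu : 0 ≤ u) :
    gaussianReal 0 1 (Set.Iio (-u)) ≤ ENNReal.ofReal (Real.exp (-(u^2)/2) / 2) := by
  have hpre : (fun x : ℝ => (-1 : ℝ) * x) ⁻¹' (Set.Iio (-u)) = Set.Ioi u := by
    ext x
    simp only [Set.mem_preimage, Set.mem_Iio, Set.mem_Ioi]
    constructor <;> intro h <;> linarith
  have : gaussianReal 0 1 (Set.Iio (-u))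
      = gaussianReal 0 1 ((fun x : ℝ => (-1 : ℝ) * x) ⁻¹' (Set.Iio (-u))) := by
    conv_lhs => rw [← gauss_map_neg]
    rw [Measure.map_apply (by fun_prop) measurableSet_Iio]
  rw [this, hpre]
  exact gauss_Ioi_le hu

lemma gauss_sq_tail {s : ℝ} (hs : 0 ≤ s) :
    gaussianReal 0 1 {x : ℝ | s < x^2} ≤ ENNReal.ofReal (Real.exp (-s/2)) := by
  have hsub : {x : ℝ | s < x^2} ⊆ Set.Iio (-Real.sqrt s) ∪ Set.Ioi (Real.sqrt s) := by
    intro x hx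
    have h1 : Real.sqrt s < |x| := by
      simpa [Real.sqrt_sq_eq_abs] using Real.sqrt_lt_sqrt hs hx
    rcases le_or_gt 0 x with h | h
    · right
      simpa [abs_of_nonneg h] using h1
    · left
      rw [abs_of_neg h] at h1
      simp only [Set.mem_Iio]
      linarith
  have hsq : (Real.sqrt s)^2 = s := Real.sq_sqrt hs
  calc gaussianReal 0 1 {x : ℝ | s < x^2}
      ≤ gaussianReal 0 1 (Set.Iio (-Real.sqrt s) ∪ Set.Ioi (Real.sqrt s)) :=
        measure_mono hsub
    _ ≤ gaussianReal 0 1 (Set.Iio (-Real.sqrt s)) + gaussianReal 0 1 (Set.Ioi (Real.sqrt s)) :=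
        measure_union_le _ _
    _ ≤ ENNReal.ofReal (Real.exp (-((Real.sqrt s)^2)/2) / 2)
        + ENNReal.ofReal (Real.exp (-((Real.sqrt s)^2)/2) / 2) :=
        add_le_add (gauss_Iio_le (Real.sqrt_nonneg s)) (gauss_Ioi_le (Real.sqrt_nonneg s))
    _ = ENNReal.ofReal (Real.exp (-s/2)) := by
        rw [← ENNReal.ofReal_add (by positivity) (by positivity), hsq]
        congr 1
        ring

/-- Maximum of `K` standard Gaussians, squared: if every coordinate of
`Z : Ω → Fin K → ℝ` has the standard Gaussian law (no independence assumed),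
then `E[max_a Z(a)²] ≤ 2(1 + log K)`. -/
theorem expectation_max_sq_gaussians_le
    {Ω : Type*} [MeasurableSpace Ω] (P : Measure Ω) [IsProbabilityMeasure P]
    {K : ℕ} (hK : 1 ≤ K) (Z : Ω → Fin K → ℝ)
    (hmeas : ∀ a : Fin K, Measurable fun ω => Z ω a)
    (hlaw : ∀ a : Fin K, Measure.map (fun ω => Z ω a) P = gaussianReal 0 1) :
    ∫⁻ ω, ENNReal.ofReal (⨆ a : Fin K, (Z ω a) ^ 2) ∂P
      ≤ ENNReal.ofReal (2 * (1 + Real.log K)) := by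
  haveI : NeZero K := ⟨by omega⟩
  have hK1 : (1:ℝ) ≤ (K:ℝ) := by exact_mod_cast hK
  have hKpos : (0:ℝ) < (K:ℝ) := by linarith
  set c : ℝ := 2 * Real.log K with hc_def
  have hc : 0 ≤ c := by
    have := Real.log_nonneg hK1
    positivity
  have hb : ∀ ω, BddAbove (Set.range fun a : Fin K => Z ω a ^ 2) :=
    fun ω => (Set.finite_range _).bddAbove
  have hf_nn : ∀ ω, 0 ≤ ⨆ a : Fin K, Z ω a ^ 2 := fun ω =>
    le_trans (sq_nonneg (Z ω ⟨0, hK⟩)) (le_ciSup (hb ω) ⟨0, hK⟩)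
  have hf_meas : Measurable fun ω => ⨆ a : Fin K, Z ω a ^ 2 :=
    Measurable.iSup fun a => (hmeas a).pow_const 2
  rw [lintegral_eq_lintegral_meas_lt P (ae_of_all _ hf_nn) hf_meas.aemeasurable]
  have hsplit : Set.Ioi (0:ℝ) = Set.Ioc 0 c ∪ Set.Ioi c := (Set.Ioc_union_Ioi_eq_Ioi hc).symm
  rw [hsplit, lintegral_union measurableSet_Ioi (Set.Ioc_disjoint_Ioi le_rfl)]
  have piece1 : ∫⁻ t in Set.Ioc 0 c, P {ω | t < ⨆ a : Fin K, Z ω a ^ 2}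
      ≤ ENNReal.ofReal c := by
    calc ∫⁻ t in Set.Ioc 0 c, P {ω | t < ⨆ a : Fin K, Z ω a ^ 2}
        ≤ ∫⁻ _ in Set.Ioc 0 c, 1 := lintegral_mono fun t => prob_le_one
      _ = ENNReal.ofReal c := by rw [setLIntegral_one, Real.volume_Ioc, sub_zero]
  have piece2 : ∫⁻ t in Set.Ioi c, P {ω | t < ⨆ a : Fin K, Z ω a ^ 2}
      ≤ ENNReal.ofReal 2 := by
    have hbound : ∀ t ∈ Set.Ioi c, P {ω | t < ⨆ a : Fin K, Z ω a ^ 2}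
        ≤ (K : ℝ≥0∞) * ENNReal.ofReal (Real.exp (-t/2)) := by
      intro t ht
      have ht0 : 0 ≤ t := le_trans hc (le_of_lt ht)
      have hsub : {ω | t < ⨆ a : Fin K, Z ω a ^ 2} ⊆ ⋃ a, {ω | t < Z ω a ^ 2} := by
        intro ω hω
        obtain ⟨a, ha⟩ := (lt_ciSup_iff (hb ω)).1 hω
        exact Set.mem_iUnion.2 ⟨a, ha⟩
      have hsetT : MeasurableSet {x : ℝ | t < x ^ 2} :=
        measurableSet_lt measurable_const (measurable_id.pow_const 2)
      calc P {ω | t < ⨆ a : Fin K, Z ω a ^ 2}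
          ≤ P (⋃ a, {ω | t < Z ω a ^ 2}) := measure_mono hsub
        _ ≤ ∑ a : Fin K, P {ω | t < Z ω a ^ 2} := measure_iUnion_fintype_le _ _
        _ ≤ ∑ _a : Fin K, ENNReal.ofReal (Real.exp (-t/2)) := by
            refine Finset.sum_le_sum fun a _ => ?_
            have : P {ω | t < Z ω a ^ 2}
                = (Measure.map (fun ω => Z ω a) P) {x : ℝ | t < x ^ 2} := by
              rw [Measure.map_apply (hmeas a) hsetT]
              rfl
            rw [this, hlaw a]
            exact gauss_sq_tail ht0
        _ = (K : ℝ≥0∞) * ENNReal.ofReal (Real.exp (-t/2)) := by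
            simp [Finset.sum_const, nsmul_eq_mul]
    have hintexp : IntegrableOn (fun t : ℝ => Real.exp (-(1/2) * t)) (Set.Ioi c) :=
      exp_neg_integrableOn_Ioi c one_half_pos
    calc ∫⁻ t in Set.Ioi c, P {ω | t < ⨆ a : Fin K, Z ω a ^ 2}
        ≤ ∫⁻ t in Set.Ioi c, (K : ℝ≥0∞) * ENNReal.ofReal (Real.exp (-t/2)) := by
          refine setLIntegral_mono ?_ hbound
          exact measurable_const.mul (ENNReal.measurable_ofReal.comp (by fun_prop))
      _ = (K : ℝ≥0∞) * ∫⁻ t in Set.Ioi c, ENNReal.ofReal (Real.exp (-t/2)) := by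
          have hm : Measurable fun t : ℝ => ENNReal.ofReal (Real.exp (-t/2)) :=
            ENNReal.measurable_ofReal.comp (by fun_prop)
          rw [lintegral_const_mul _ hm]
      _ = (K : ℝ≥0∞) * ENNReal.ofReal (∫ t in Set.Ioi c, Real.exp (-t/2)) := by
          rw [ofReal_integral_eq_lintegral_ofReal ?hi (ae_of_all _ fun t => (Real.exp_pos _).le)]
          case hi =>
            refine hintexp.congr_fun (fun t _ => by ring_nf) measurableSet_Ioi
      _ ≤ ENNReal.ofReal 2 := by
          have hval : ∫ t in Set.Ioi c, Real.exp (-t/2) = 2 * Real.exp (-(c/2)) := by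
            have h := integral_comp_mul_left_Ioi (fun x => Real.exp (-x)) c (b := (1/2:ℝ))
              one_half_pos
            simp only [smul_eq_mul] at h
            have h2 : ∀ t : ℝ, Real.exp (-(1/2 * t)) = Real.exp (-t/2) := fun t => by ring_nf
            rw [show (fun t : ℝ => Real.exp (-t/2)) = fun t : ℝ => Real.exp (-(1/2 * t)) from
              funext fun t => (h2 t).symm]
            rw [h, integral_exp_neg_Ioi]
            norm_num
            ring_nf
          rw [hval]
          have hexpc : Real.exp (-(c/2)) = (K:ℝ)⁻¹ := by
            rw [hc_def]
            rw [show -(2 * Real.log K / 2) = -Real.log K by ring, Real.exp_neg,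
              Real.exp_log hKpos]
          rw [hexpc]
          rw [show ((K:ℝ≥0∞)) = ENNReal.ofReal (K:ℝ) from (ENNReal.ofReal_natCast K).symm,
            ← ENNReal.ofReal_mul (by positivity)]
          apply ENNReal.ofReal_le_ofReal
          rw [mul_comm, mul_assoc]
          rw [inv_mul_cancel₀ (ne_of_gt hKpos)]
          norm_num
  calc (∫⁻ t in Set.Ioc 0 c, P {ω | t < ⨆ a : Fin K, Z ω a ^ 2})
        + ∫⁻ t in Set.Ioi c, P {ω | t < ⨆ a : Fin K, Z ω a ^ 2}
      ≤ ENNReal.ofReal c + ENNReal.ofReal 2 := add_le_add piece1 piece2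
    _ = ENNReal.ofReal (2 * (1 + Real.log K)) := by
        rw [← ENNReal.ofReal_add hc (by norm_num)]
        congr 1
        rw [hc_def]
        ring
end

section
/- Gaussian decoupling bound with logarithmic action dependence: let (Ω, ℙ) be a probability space, d ≥ 1, K ≥ 1, θ : Ω → ℝ^d a random vector, m ∈ ℝ^d, φ : Fin K → ℝ^d a feature map, a⋆ : ℝ^d → Fin K a measurable selector, and σ : Fin K → ℝ with σ(a) ≥ 0 such that for every a ∈ Fin K the real random variable ω ↦ ⟨θ(ω) − m, φ(a)⟩ has the Gaussian law with mean 0 and variance σ(a)² (no joint independence assumed). Then (E[⟨θ − m, φ(a⋆(θ))⟩])² ≤ 2·(1 + log K)·E[σ(a⋆(θ))²], where both expectations are with respect to ℙ. (This yields the bound ρ ≤ 2(1 + log K) on the lifted information ratio of Thompson sampling for linear losses with Gaussian noise and Gaussian prior.) -/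
/-!
Write `p_a` for the probability of the event `{a⋆(θ) = a}` and `X_a = ⟨θ - m, φ(a)⟩`. The
inequality `y ≤ e^(y - b) + b - 1`, integrated over an event `E` with `b` tuned to `E`, gives
`E[Y; E] ≤ P(E) (log E[e^Y] + log P(E)⁻¹)`. With `Y = λ X_a` and the Gaussian moment generating
function this yields `E[X_a; a⋆ = a] ≤ p_a σ_a √(2 (1 + log p_a⁻¹))`, for every `a` separately, so
no joint law is needed. Summing over `a`, Cauchy–Schwarz bounds the sum by
`√(E[σ_{a⋆}²]) · √(2 ∑ p_a (1 + log p_a⁻¹))`, and the entropy `∑ p_a log p_a⁻¹` is at most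
`log K`. The same bound for `-X` controls the absolute value.
-/

open MeasureTheory ProbabilityTheory Real
open scoped NNReal

lemma sum_negMulLog_le_log_card {ι : Type*} [Fintype ι] {p : ι → ℝ} (hp : ∀ i, 0 ≤ p i)
    (hsum : ∑ i, p i = 1) : ∑ i, negMulLog (p i) ≤ log (Fintype.card ι) := by
  set K : ℝ := (Fintype.card ι : ℝ)
  have hK : 0 < K := by
    have : Nonempty ι := by
      by_contra h
      simp [not_nonempty_iff.mp h] at hsum
    exact Nat.cast_pos.mpr Fintype.card_pos
  -- `log x ≤ x - 1` at `x = (K p)⁻¹`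
  have hterm : ∀ i, negMulLog (p i) ≤ p i * log K + (K⁻¹ - p i) := by
    intro i
    rcases (hp i).eq_or_lt with h | h
    · simp [← h, hK.le]
    · have := log_le_sub_one_of_pos (inv_pos.mpr (mul_pos hK h))
      rw [log_inv, log_mul hK.ne' h.ne'] at this
      have := mul_le_mul_of_nonneg_left this h.le
      rw [negMulLog]
      field_simp at this ⊢
      linarith
  calc ∑ i, negMulLog (p i) ≤ ∑ i, (p i * log K + (K⁻¹ - p i)) :=
        Finset.sum_le_sum fun i _ => hterm i
    _ = log K := by simp [Finset.sum_add_distrib, ← Finset.sum_mul, hsum, K, hK.ne']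

lemma sq_sum_mul_sqrt_le_of_sum_eq_one {ι : Type*} [Fintype ι] {v : ι → ℝ≥0} {p : ι → ℝ}
    (hp : ∀ i, 0 ≤ p i) (hsum : ∑ i, p i = 1) :
    (∑ i, p i * √(v i) * √(2 * (1 + log (p i)⁻¹))) ^ 2
      ≤ 2 * (1 + log (Fintype.card ι)) * ∑ i, p i * v i := by
  have hL : ∀ i, 0 ≤ 2 * (1 + log (p i)⁻¹) := fun i => by
    rcases (hp i).eq_or_lt with h | h
    · simp [← h]
    · have hp1 : p i ≤ 1 := hsum ▸ Finset.single_le_sum (fun j _ => hp j) (Finset.mem_univ i)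
      have := log_nonneg ((one_le_inv₀ h).mpr hp1)
      positivity
  have hCS := Finset.sum_sq_le_sum_mul_sum_of_sq_le_mul Finset.univ
    (r := fun i => p i * √(v i) * √(2 * (1 + log (p i)⁻¹)))
    (f := fun i => p i * v i) (g := fun i => p i * (2 * (1 + log (p i)⁻¹)))
    (fun i _ => mul_nonneg (hp i) (v i).coe_nonneg) (fun i _ => mul_nonneg (hp i) (hL i))
    (fun i _ => le_of_eq <| by
      rw [mul_pow, mul_pow, sq_sqrt (v i).coe_nonneg, sq_sqrt (hL i)]; ring)
  have hentropy : ∑ i, p i * (2 * (1 + log (p i)⁻¹)) = 2 * (1 + ∑ i, negMulLog (p i)) := by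
    calc ∑ i, p i * (2 * (1 + log (p i)⁻¹)) = ∑ i, (2 * p i + 2 * negMulLog (p i)) :=
          Finset.sum_congr rfl fun i _ => by rw [negMulLog, log_inv]; ring
      _ = 2 * (1 + ∑ i, negMulLog (p i)) := by
          rw [Finset.sum_add_distrib, ← Finset.mul_sum, ← Finset.mul_sum, hsum, mul_add]
  have hpv : 0 ≤ ∑ i, p i * v i :=
    Finset.sum_nonneg fun i _ => mul_nonneg (hp i) (v i).coe_nonneg
  calc _ ≤ (∑ i, p i * v i) * (2 * (1 + ∑ i, negMulLog (p i))) := hentropy ▸ hCS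
    _ ≤ (∑ i, p i * v i) * (2 * (1 + log (Fintype.card ι))) := by
        gcongr
        exact sum_negMulLog_le_log_card hp hsum
    _ = _ := mul_comm _ _

section

variable {Ω : Type*} [MeasurableSpace Ω]

lemma integral_comp_eq_sum_setIntegral {E : Type*} [NormedAddCommGroup E] [NormedSpace ℝ E]
    {ι : Type*} [Fintype ι] [MeasurableSpace ι] [MeasurableSingletonClass ι] {μ : Measure Ω}
    {X : ι → Ω → E} (hX : ∀ i, Integrable (X i) μ) {A : Ω → ι} (hA : Measurable A) :
    ∫ ω, X (A ω) ω ∂μ = ∑ i, ∫ ω in A ⁻¹' {i}, X i ω ∂μ := by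
  have hfiber : ∀ i, MeasurableSet (A ⁻¹' {i}) := fun i => hA (measurableSet_singleton i)
  have hsplit : (fun ω => X (A ω) ω) = fun ω => ∑ i, (A ⁻¹' {i}).indicator (X i) ω := by
    ext ω
    rw [Finset.sum_eq_single_of_mem (A ω) (Finset.mem_univ _) fun i _ hi =>
      Set.indicator_of_notMem (show ω ∉ A ⁻¹' {i} from hi.symm) (X i),
      Set.indicator_of_mem (show ω ∈ A ⁻¹' {A ω} from rfl)]
  rw [hsplit, integral_finsetSum _ fun i _ => (hX i).indicator (hfiber i)]
  exact Finset.sum_congr rfl fun i _ => integral_indicator (hfiber i)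

lemma setIntegral_le_mul_log_integral_exp {μ : Measure Ω} [IsFiniteMeasure μ] {Y : Ω → ℝ}
    (hY : Integrable Y μ) (hexp : Integrable (fun ω => exp (Y ω)) μ) {E : Set Ω}
    (hp : 0 < μ.real E) :
    ∫ ω in E, Y ω ∂μ ≤ μ.real E * (log (∫ ω, exp (Y ω) ∂μ) + log (μ.real E)⁻¹) := by
  set p := μ.real E
  set M := ∫ ω, exp (Y ω) ∂μ
  have : NeZero μ := ⟨fun h => by simp [p, h] at hp⟩
  have hM : 0 < M := integral_exp_pos hexp
  set b := log M + log p⁻¹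
  have hb : exp (-b) = p / M := by
    rw [exp_neg, exp_add, exp_log hM, exp_log (inv_pos.mpr hp)]
    field_simp
  have hpt : ∀ y, y ≤ exp (-b) * exp y + (b - 1) := fun y => by
    have := add_one_le_exp (y - b)
    rw [sub_eq_neg_add, exp_add] at this
    linarith
  calc ∫ ω in E, Y ω ∂μ ≤ ∫ ω in E, (exp (-b) * exp (Y ω) + (b - 1)) ∂μ :=
        setIntegral_mono hY.integrableOn
          ((hexp.const_mul _).add (integrable_const _)).integrableOn fun ω => hpt (Y ω)
    _ = exp (-b) * ∫ ω in E, exp (Y ω) ∂μ + p * (b - 1) := by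
        rw [integral_add (hexp.const_mul _).integrableOn (integrable_const _), integral_const_mul,
          setIntegral_const, smul_eq_mul]
    _ ≤ exp (-b) * M + p * (b - 1) := by
        gcongr
        exact setIntegral_le_integral hexp (Filter.Eventually.of_forall fun ω => (exp_pos _).le)
    _ = p * b := by
        rw [hb]
        field_simp
        ring

variable {P : Measure Ω}

lemma ProbabilityTheory.HasLaw.integrable_of_gaussianReal {X : Ω → ℝ} {μ : ℝ} {v : ℝ≥0}
    (hX : HasLaw X (gaussianReal μ v) P) : Integrable X P := by
  have : Integrable id (P.map X) := hX.map_eq ▸ (memLp_id_gaussianReal 1).integrable le_rfl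
  exact this.comp_aemeasurable hX.aemeasurable

lemma setIntegral_le_of_hasLaw_gaussianReal {X : Ω → ℝ} {v : ℝ≥0}
    (hX : HasLaw X (gaussianReal 0 v) P) (E : Set Ω) :
    ∫ ω in E, X ω ∂P ≤ P.real E * √v * √(2 * (1 + log (P.real E)⁻¹)) := by
  have := hX.isProbabilityMeasure
  rcases (measureReal_nonneg : 0 ≤ P.real E).eq_or_lt with hp | hp
  · rw [← hp, setIntegral_measure_zero _ ((measureReal_eq_zero_iff).mp hp.symm)]
    simp
  set p := P.real E
  rcases eq_or_ne v 0 with rfl | hv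
  · rw [gaussianReal_zero_var] at hX
    rw [integral_congr_ae (ae_restrict_of_ae hX.ae_eq_of_dirac)]
    simp
  have hL : 0 ≤ log p⁻¹ := log_nonneg ((one_le_inv₀ hp).mpr measureReal_le_one)
  -- `λ = t / √v` turns the bound into `λ ∫_E X ≤ p (t² / 2 + log p⁻¹) ≤ p t²`
  set t := √(2 * (1 + log p⁻¹))
  have ht2 : t ^ 2 = 2 * (1 + log p⁻¹) := sq_sqrt (by positivity)
  have hl : 0 < t / √v := div_pos (sqrt_pos.mpr (by positivity)) (sqrt_pos.mpr (by positivity))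
  have hmgf : mgf X P (t / √v) = exp (t ^ 2 / 2) := by
    rw [mgf_gaussianReal hX.map_eq, div_pow, sq_sqrt v.coe_nonneg, zero_mul, zero_add,
      mul_div_cancel₀ _ (NNReal.coe_ne_zero.mpr hv)]
  have key := setIntegral_le_mul_log_integral_exp
    (hX.integrable_of_gaussianReal.const_mul (t / √v)) (mgf_pos_iff.mp (hmgf ▸ exp_pos _)) hp
  rw [integral_const_mul, ← mgf, hmgf, log_exp, ht2] at key
  calc ∫ ω in E, X ω ∂P ≤ p * t ^ 2 / (t / √v) := by
        rw [le_div_iff₀' hl, ht2]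
        nlinarith
    _ = p * √v * t := by
        field_simp

variable {ι : Type*} [Fintype ι] [MeasurableSpace ι]
  [MeasurableSingletonClass ι] {X : ι → Ω → ℝ} {v : ι → ℝ≥0} {A : Ω → ι}

lemma integral_selector_le_of_hasLaw_gaussianReal
    (hX : ∀ i, HasLaw (X i) (gaussianReal 0 (v i)) P) (hA : Measurable A) :
    ∫ ω, X (A ω) ω ∂P ≤ ∑ i, P.real (A ⁻¹' {i}) * √(v i) *
      √(2 * (1 + log (P.real (A ⁻¹' {i}))⁻¹)) := by
  rw [integral_comp_eq_sum_setIntegral (fun i => (hX i).integrable_of_gaussianReal) hA]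
  exact Finset.sum_le_sum fun i _ => setIntegral_le_of_hasLaw_gaussianReal (hX i) _

lemma sq_integral_selector_le_of_hasLaw_gaussianReal [IsProbabilityMeasure P]
    (hX : ∀ i, HasLaw (X i) (gaussianReal 0 (v i)) P) (hA : Measurable A) :
    (∫ ω, X (A ω) ω ∂P) ^ 2 ≤ 2 * (1 + log (Fintype.card ι)) * ∫ ω, (v (A ω) : ℝ) ∂P := by
  have hsum : ∑ i, P.real (A ⁻¹' {i}) = 1 := by
    rw [sum_measureReal_preimage_singleton _ fun i _ => hA (measurableSet_singleton i),
      Finset.coe_univ, Set.preimage_univ, probReal_univ]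
  have hv : ∫ ω, (v (A ω) : ℝ) ∂P = ∑ i, P.real (A ⁻¹' {i}) * v i := by
    rw [integral_comp_eq_sum_setIntegral (X := fun i _ => (v i : ℝ))
      (fun _ => integrable_const _) hA]
    simp only [setIntegral_const, smul_eq_mul]
  have hneg : ∀ i, HasLaw (-X i) (gaussianReal 0 (v i)) P := fun i => by
    simpa using gaussianReal_neg (hX i)
  have habs : |∫ ω, X (A ω) ω ∂P| ≤ ∑ i, P.real (A ⁻¹' {i}) * √(v i) *
      √(2 * (1 + log (P.real (A ⁻¹' {i}))⁻¹)) := by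
    refine abs_le.mpr ⟨?_, integral_selector_le_of_hasLaw_gaussianReal hX hA⟩
    simpa [integral_neg, neg_le] using integral_selector_le_of_hasLaw_gaussianReal hneg hA
  rw [hv, ← sq_abs]
  exact (pow_le_pow_left₀ (abs_nonneg _) habs 2).trans
    (sq_sum_mul_sqrt_le_of_sum_eq_one (fun _ => measureReal_nonneg) hsum)

end

theorem gaussian_decoupling_log_actions_general
    {Ω : Type*} [MeasurableSpace Ω] (P : Measure Ω) [IsProbabilityMeasure P]
    {d K : ℕ}
    (θ : Ω → EuclideanSpace ℝ (Fin d)) (hθ : Measurable θ)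
    (m : EuclideanSpace ℝ (Fin d)) (φ : Fin K → EuclideanSpace ℝ (Fin d))
    (astar : EuclideanSpace ℝ (Fin d) → Fin K) (hastar : Measurable astar)
    (σ : Fin K → ℝ)
    (hlaw : ∀ a : Fin K,
      Measure.map (fun ω => (inner ℝ (θ ω - m) (φ a) : ℝ)) P
        = gaussianReal 0 (⟨σ a ^ 2, sq_nonneg (σ a)⟩ : NNReal)) :
    (∫ ω, (inner ℝ (θ ω - m) (φ (astar (θ ω))) : ℝ) ∂P) ^ 2
      ≤ 2 * (1 + Real.log K) * ∫ ω, σ (astar (θ ω)) ^ 2 ∂P := by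
  have hX : ∀ a, HasLaw (fun ω => (inner ℝ (θ ω - m) (φ a) : ℝ))
      (gaussianReal 0 ⟨σ a ^ 2, sq_nonneg (σ a)⟩) P :=
    fun a => ⟨((hθ.sub measurable_const).inner measurable_const).aemeasurable, hlaw a⟩
  have := sq_integral_selector_le_of_hasLaw_gaussianReal hX (A := fun ω => astar (θ ω))
    (hastar.comp hθ)
  rwa [Fintype.card_fin] at this

/-- Gaussian decoupling bound with logarithmic action dependence: if for each
action `a` the gap `⟨θ − m, φ(a)⟩` is a centered Gaussian with variance
`σ(a)²` (no joint independence assumed), then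
`(E[⟨θ − m, φ(a⋆(θ))⟩])² ≤ 2(1 + log K) · E[σ(a⋆(θ))²]`.  This yields the
bound `ρ ≤ 2(1 + log K)` on the lifted information ratio of Thompson sampling
for linear losses with Gaussian noise and Gaussian prior. -/
theorem gaussian_decoupling_log_actions
    {Ω : Type*} [MeasurableSpace Ω] (P : Measure Ω) [IsProbabilityMeasure P]
    {d K : ℕ} (hd : 1 ≤ d) (hK : 1 ≤ K)
    (θ : Ω → EuclideanSpace ℝ (Fin d)) (hθ : Measurable θ)
    (m : EuclideanSpace ℝ (Fin d)) (φ : Fin K → EuclideanSpace ℝ (Fin d))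
    (astar : EuclideanSpace ℝ (Fin d) → Fin K) (hastar : Measurable astar)
    (σ : Fin K → ℝ) (hσ : ∀ a, 0 ≤ σ a)
    (hlaw : ∀ a : Fin K,
      Measure.map (fun ω => (inner ℝ (θ ω - m) (φ a) : ℝ)) P
        = gaussianReal 0 (⟨σ a ^ 2, sq_nonneg (σ a)⟩ : NNReal)) :
    (∫ ω, (inner ℝ (θ ω - m) (φ (astar (θ ω))) : ℝ) ∂P) ^ 2
      ≤ 2 * (1 + Real.log K) * ∫ ω, σ (astar (θ ω)) ^ 2 ∂P :=
  gaussian_decoupling_log_actions_general P θ hθ m φ astar hastar σ hlaw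
end
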